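/- arXiv:1512.06502 — 2 statements merged into one kernel-verified Lean document; each statement's English description precedes it below -/
import Mathlib

section
/- Let F be the (unnormalized) N×N DFT matrix with entries F_{r,c} = e^{-2πi rc/N}, where N = LM. Fix l ∈ {0,...,L-1} and a set J of column indices j_0 < j_1 < ... < j_{K-1} in {0,...,N-1}. Let F̃_l be the M×K matrix with entries (F̃_l)_{r,q} = e^{-2πi (l + rL) j_q / N}. Let κ be the number of distinct residues of the j_q modulo M. Then rank(F̃_l) = κ. -/
/-!
With `ζ = exp (-2πi/M)` and `ζ ^ M = 1`, the entry `(F̃_l)_{r,q}` factors as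
`exp (-2πi l j_q / N) * (ζ ^ (j_q % M)) ^ r`. So column `q` is a nonzero multiple of row `j_q % M`
of the Vandermonde matrix of the `M` distinct powers `ζ ^ s`, whose rows are linearly independent;
the rank is therefore the number of distinct residues `j_q % M`.
-/

open Complex Finset Matrix

theorem LinearIndependent.finrank_span_range_comp {K V ι n : Type*} [Field K] [AddCommGroup V]
    [Module K V] [Fintype n] [DecidableEq ι] {w : ι → V} (hw : LinearIndependent K w) (f : n → ι) :
    Module.finrank K (Submodule.span K (Set.range (w ∘ f))) = (univ.image f).card := by
  have hrange : Set.range (w ∘ f) = Set.range (w ∘ ((↑) : univ.image f → ι)) := by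
    ext; simp
  rw [hrange, finrank_span_eq_card (hw.comp _ Subtype.val_injective), Fintype.card_coe]

theorem Matrix.rank_eq_card_image_of_apply_eq_mul {K m n ι : Type*} [Field K] [Fintype n]
    [DecidableEq n] [DecidableEq ι] (A : Matrix m n K) {w : ι → m → K}
    (hw : LinearIndependent K w) (f : n → ι) (c : n → K) (hc : ∀ q, c q ≠ 0)
    (hA : ∀ i q, A i q = c q * w (f q) i) :
    A.rank = (univ.image f).card := by
  have hfactor : A = of (fun i q => w (f q) i) * diagonal c := by
    ext i q; simp [mul_diagonal, hA, mul_comm]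
  have hdiag : IsUnit (diagonal c).det := by
    simpa [det_diagonal, isUnit_iff_ne_zero, prod_ne_zero_iff] using hc
  rw [hfactor, rank_mul_eq_left_of_isUnit_det _ _ hdiag, rank_eq_finrank_span_cols]
  exact hw.finrank_span_range_comp f

theorem Matrix.linearIndependent_vandermonde {R : Type*} [CommRing R] [IsDomain R] {n : ℕ}
    {v : Fin n → R} (hv : Function.Injective v) : LinearIndependent R (vandermonde v) :=
  linearIndependent_rows_of_det_ne_zero (det_vandermonde_ne_zero_iff.mpr hv)

theorem Complex.injective_pow_exp_neg_two_pi_I_div (n : ℕ) :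
    Function.Injective (fun s : Fin n => exp (-(2 * Real.pi * I / n)) ^ (s : ℕ)) := by
  intro s t hst
  rw [exp_neg] at hst
  exact Fin.ext ((isPrimitiveRoot_exp n s.pos.ne').inv.pow_inj s.isLt t.isLt hst)

theorem Complex.exp_neg_two_pi_I_add_mul_div {L M : ℕ} (hL : L ≠ 0) (hM : M ≠ 0) (l r j : ℕ) :
    exp (-2 * Real.pi * I * (l + r * L) * j / ((L * M : ℕ) : ℂ)) =
      exp (-2 * Real.pi * I * l * j / ((L * M : ℕ) : ℂ)) *
        (exp (-(2 * Real.pi * I / M)) ^ (j % M)) ^ r := by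
  have hsplit : -2 * Real.pi * I * (l + r * L) * j / ((L * M : ℕ) : ℂ) =
      -2 * Real.pi * I * l * j / ((L * M : ℕ) : ℂ) + (r * j : ℕ) * -(2 * Real.pi * I / M) := by
    push_cast; field_simp; ring
  have hroot : exp (-(2 * Real.pi * I / M)) ^ M = 1 := by
    rw [exp_neg, inv_pow, (isPrimitiveRoot_exp M hM).pow_eq_one, inv_one]
  rw [hsplit, exp_add, exp_nat_mul, ← pow_eq_pow_mod j hroot, ← pow_mul, mul_comm r]

theorem rank_extracted_dft_general (L M K : ℕ)
    (l : Fin L) (j : Fin K → Fin (L * M))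
    (Ft : Matrix (Fin M) (Fin K) ℂ)
    (hFt : ∀ (r : Fin M) (q : Fin K),
      Ft r q = Complex.exp (-2 * Real.pi * I * ((l : ℂ) + (r : ℂ) * L) * ((j q : ℕ) : ℂ)
        / ((L * M : ℕ) : ℂ))) :
    Ft.rank = (Finset.univ.image (fun q : Fin K => (j q : ℕ) % M)).card := by
  have hcol (r : Fin M) (q : Fin K) : Ft r q =
      exp (-2 * Real.pi * I * (l : ℕ) * (j q : ℕ) / ((L * M : ℕ) : ℂ)) *
        vandermonde (fun s : Fin M => exp (-(2 * Real.pi * I / M)) ^ (s : ℕ)) (j q).modNat r := by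
    have hLM := mul_ne_zero_iff.mp (j q).pos.ne'
    exact (hFt r q).trans (exp_neg_two_pi_I_add_mul_div hLM.1 hLM.2 l r (j q))
  rw [rank_eq_card_image_of_apply_eq_mul Ft
    (linearIndependent_vandermonde (injective_pow_exp_neg_two_pi_I_div M)) _ _
    (fun q => exp_ne_zero _) hcol, ← card_image_of_injective _ Fin.val_injective, image_image]
  rfl

theorem rank_extracted_dft (L M K : ℕ) (hL : 0 < L) (hM : 0 < M) (hK : 0 < K)
    (l : Fin L) (j : Fin K → Fin (L * M)) (hj : StrictMono j)
    (Ft : Matrix (Fin M) (Fin K) ℂ)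
    (hFt : ∀ (r : Fin M) (q : Fin K),
      Ft r q = Complex.exp (-2 * Real.pi * I * ((l : ℂ) + (r : ℂ) * L) * ((j q : ℕ) : ℂ)
        / ((L * M : ℕ) : ℂ))) :
    Ft.rank = (Finset.univ.image (fun q : Fin K => (j q : ℕ) % M)).card :=
  rank_extracted_dft_general L M K l j Ft hFt
end

section
/- Let A be a blocked pseudo-circulant channel matrix: 𝓗(z) is the M×M matrix whose (r,c) entry is H̃_{(r-c) mod M}(z) multiplied by z^{-1} when r < c, where H̃_m(z) = Σ_k h_{kM+m} z^{-k} are the polyphase components of H(z) = Σ_d h_d z^{-d}. Then for z = e^{2πi l/L} and N = LM, the matrix 𝓗_l = 𝓗(e^{2πi l/L}) satisfies the diagonalization 𝓗_l = U_lᴴ H_l U_l, where U_l has entries (U_l)_{r,c} = (1/√M) e^{-2πi (l + rL) c / N} and H_l = diag(H_l, H_{l+L}, ..., H_{l+(M-1)L}) with H_n = Σ_d h_d e^{-2πi n d / N}. -/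
/-!
Entrywise, `(Uᴴ diag(H_{l+mL}) U)_{rc} = (1/M) ∑_d h_d e^{-2πi l t/(LM)} ∑_m e^{-2πi m t/M}` with
`t = d + c - r`. The inner sum over the `M`-th roots of unity vanishes unless `M ∣ t`, so only the
taps `d = kM + ((r - c) mod M)` of the `((r - c) mod M)`-th polyphase component survive. For these
`t = kM` when `c ≤ r` and `t = (k + 1)M` when `r < c`, so the remaining phase is `e^{-2πi l k/L}`,
times the extra delay factor `e^{-2πi l/L}` exactly above the diagonal.
-/

open Matrix Complex Finset
open scoped Real

theorem IsPrimitiveRoot.sum_range_pow_zpow_eq_ite {K : Type*} [Field K] {ζ : K} {k : ℕ}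
    (hζ : IsPrimitiveRoot ζ k) (t : ℤ) :
    ∑ m ∈ range k, (ζ ^ t) ^ m = if (k : ℤ) ∣ t then (k : K) else 0 := by
  split_ifs with hkt
  · simp [(hζ.zpow_eq_one_iff_dvd t).2 hkt]
  · have hne : ζ ^ t - 1 ≠ 0 := sub_ne_zero.2 fun h => hkt ((hζ.zpow_eq_one_iff_dvd t).1 h)
    have hpow : (ζ ^ t) ^ k = 1 := by
      rw [← zpow_natCast, ← _root_.zpow_mul, mul_comm, _root_.zpow_mul, zpow_natCast,
        hζ.pow_eq_one, _root_.one_zpow]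
    exact (mul_eq_zero.1 (by rw [geom_sum_mul, hpow, sub_self])).resolve_right hne

theorem sum_range_exp_neg_two_pi_I_mul_div {M : ℕ} (hM : M ≠ 0) (t : ℤ) :
    ∑ m ∈ range M, cexp (-2 * π * I * m * t / M) = if (M : ℤ) ∣ t then (M : ℂ) else 0 := by
  simp only [← dvd_neg (b := t), ← (isPrimitiveRoot_exp M hM).sum_range_pow_zpow_eq_ite]
  refine sum_congr rfl fun m _ => ?_
  rw [← exp_int_mul, ← exp_nat_mul]
  congr 1
  push_cast
  ring

theorem Int.natCast_sub_natCast_emod_of_lt {M r c : ℕ} (hr : r < M) (hc : c < M) :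
    ((r : ℤ) - c) % M = r - c + if r < c then (M : ℤ) else 0 := by
  split_ifs with hrc
  · rw [← Int.add_emod_right, Int.emod_eq_of_lt (by omega) (by omega)]
  · rw [Int.emod_eq_of_lt (by omega) (by omega), add_zero]

theorem sum_range_mul_ite_dvd_sub {α : Type*} [AddCommMonoid α] {L M : ℕ} (hM : 0 < M) (s : ℤ)
    (f : ℕ → α) :
    ∑ d ∈ range (L * M), (if (M : ℤ) ∣ d - s then f d else 0)
      = ∑ k ∈ range L, f (k * M + (s % M).toNat) := by
  set q := (s % M).toNat
  have hq : (q : ℤ) = s % M := Int.toNat_of_nonneg (Int.emod_nonneg _ (by omega))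
  have hqM : q < M := by have := Int.emod_lt_of_pos s (by omega : (0 : ℤ) < M); omega
  have hdvd : ∀ d : ℕ, (M : ℤ) ∣ d - s ↔ d % M = q := fun d => by
    rw [← Int.modEq_iff_dvd, Int.ModEq, ← hq]
    omega
  simp only [hdvd, ← sum_filter]
  symm
  refine sum_nbij' (fun k => k * M + q) (· / M) ?_ ?_ ?_ ?_ (fun _ _ => rfl)
  · intro k hk
    simp only [mem_range, mem_filter] at hk ⊢
    exact ⟨by nlinarith, by simp [Nat.mod_eq_of_lt hqM]⟩
  · intro d hd
    simp only [mem_range, mem_filter] at hd ⊢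
    exact (Nat.div_lt_iff_lt_mul hM).2 hd.1
  · intro k _
    simp [Nat.add_div_of_dvd_right, Nat.div_eq_of_lt hqM, hM]
  · intro d hd
    simp only [mem_filter] at hd
    rw [← hd.2, Nat.div_add_mod']

theorem conjTranspose_mul_diagonal_mul_apply {n α : Type*} [Fintype n] [DecidableEq n]
    [NonUnitalNonAssocSemiring α] [Star α] (U : Matrix n n α) (w : n → α) (i j : n) :
    (Uᴴ * diagonal w * U) i j = ∑ k, star (U k i) * w k * U k j := by
  rw [mul_apply]
  simp only [mul_diagonal, conjTranspose_apply]

theorem conjTranspose_mul_diagonal_dft_mul_apply {L M l : ℕ} (hL : L ≠ 0) (h H : ℕ → ℂ)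
    (hH : ∀ n : ℕ, H n = ∑ d ∈ range (L * M), h d * cexp (-2 * π * I * n * d / (L * M)))
    (U : Matrix (Fin M) (Fin M) ℂ)
    (hU : ∀ r c : Fin M,
      U r c = 1 / (√M : ℂ) * cexp (-2 * π * I * ((l : ℂ) + r * L) * c / (L * M)))
    (r c : Fin M) :
    (Uᴴ * diagonal (fun m : Fin M => H (l + m * L)) * U) r c
      = ∑ d ∈ range (L * M), if (M : ℤ) ∣ d - (r - c)
          then h d * cexp (-2 * π * I * l * ((d - (r - c) : ℤ) : ℂ) / (L * M)) else 0 := by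
  have hM : M ≠ 0 := r.pos.ne'
  have hsqrt : (√M : ℂ) * √M = M := by exact_mod_cast Real.mul_self_sqrt (Nat.cast_nonneg M)
  have hterm : ∀ (j : Fin M) (d : ℕ),
      star (U j r) * (h d * cexp (-2 * π * I * ((l + j * L : ℕ) : ℂ) * d / (L * M))) * U j c
        = h d * cexp (-2 * π * I * l * ((d - (r - c) : ℤ) : ℂ) / (L * M)) *
          (1 / M * cexp (-2 * π * I * (j : ℕ) * ((d - (r - c) : ℤ) : ℂ) / M)) := by
    intro j d
    have hexp : cexp (2 * π * I * (l + j * L) * r / (L * M)) *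
        cexp (-2 * π * I * ((l + j * L : ℕ) : ℂ) * d / (L * M)) *
        cexp (-2 * π * I * (l + j * L) * c / (L * M))
          = cexp (-2 * π * I * l * ((d - (r - c) : ℤ) : ℂ) / (L * M)) *
            cexp (-2 * π * I * (j : ℕ) * ((d - (r - c) : ℤ) : ℂ) / M) := by
      simp only [← exp_add]
      congr 1
      push_cast
      field_simp
      ring
    have hstar :
        star (U j r) = 1 / (√M : ℂ) * cexp (2 * π * I * (l + j * L) * r / (L * M)) := by
      rw [hU, star_mul', star_def, ← exp_conj]
      simp only [map_div₀, map_one, map_mul, map_neg, map_add, map_ofNat, map_natCast,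
        conj_ofReal, conj_I]
      congr 2
      ring
    rw [hstar, hU, show (1 / M : ℂ) = 1 / √M * (1 / √M) by rw [div_mul_div_comm, one_mul, hsqrt]]
    linear_combination (1 / √M * (1 / √M) * h d) * hexp
  calc _ = ∑ j : Fin M, ∑ d ∈ range (L * M),
          h d * cexp (-2 * π * I * l * ((d - (r - c) : ℤ) : ℂ) / (L * M)) *
            (1 / M * cexp (-2 * π * I * (j : ℕ) * ((d - (r - c) : ℤ) : ℂ) / M)) := by
        rw [conjTranspose_mul_diagonal_mul_apply]
        simp only [hH, mul_sum, sum_mul, hterm]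
    _ = _ := by
        rw [sum_comm]
        refine sum_congr rfl fun d _ => ?_
        rw [← mul_sum, ← mul_sum,
          Fin.sum_univ_eq_sum_range (fun j => cexp (-2 * π * I * j * ((d - (r - c) : ℤ) : ℂ) / M)),
          sum_range_exp_neg_two_pi_I_mul_div hM]
        split_ifs <;> simp [hM]

theorem exp_neg_two_pi_I_mul_polyphase_shift {L M l r c : ℕ} (hr : r < M) (hc : c < M) (k : ℕ) :
    cexp (-2 * π * I * l * (((k * M + (((r : ℤ) - c) % M).toNat : ℕ) - (r - c) : ℤ) : ℂ) / (L * M))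
      = (if r < c then cexp (-2 * π * I * l / L) else 1) * cexp (-2 * π * I * l * k / L) := by
  have hM : (M : ℂ) ≠ 0 := by norm_cast; omega
  have hq := Int.toNat_of_nonneg (Int.emod_nonneg ((r : ℤ) - c) (by omega : (M : ℤ) ≠ 0))
  have hshift : ((k * M + (((r : ℤ) - c) % M).toNat : ℕ) : ℤ) - (r - c)
      = (k + if r < c then 1 else 0) * M := by
    push_cast
    rw [hq, Int.natCast_sub_natCast_emod_of_lt hr hc]
    split_ifs <;> ring
  rw [hshift]
  split_ifs
  · rw [← exp_add]; congr 1; push_cast; field_simp; ring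
  · rw [add_zero, one_mul]; congr 1; push_cast; field_simp

theorem vofdm_blocked_channel_diagonalization_general (L M : ℕ)
    (h : ℕ → ℂ)
    (l : Fin L)
    (H : ℕ → ℂ)
    (hH : ∀ nn : ℕ, H nn = ∑ d ∈ Finset.range (L * M),
        h d * Complex.exp (-2 * Real.pi * I * nn * d / (L * M)))
    (𝓗 : Matrix (Fin M) (Fin M) ℂ)
    (h𝓗 : ∀ r c : Fin M,
      𝓗 r c = (if (r : ℕ) < (c : ℕ)
            then Complex.exp (-2 * Real.pi * I * (l : ℂ) / L) else 1) *
          ∑ k ∈ Finset.range L,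
            h (k * M + (((r : ℤ) - (c : ℤ)) % (M : ℤ)).toNat) *
              Complex.exp (-2 * Real.pi * I * (l : ℂ) * k / L))
    (U : Matrix (Fin M) (Fin M) ℂ)
    (hU : ∀ r c : Fin M,
      U r c = (1 / (Real.sqrt M : ℂ)) *
        Complex.exp (-2 * Real.pi * I * ((l : ℂ) + (r : ℂ) * L) * (c : ℂ) / (L * M))) :
    𝓗 = Uᴴ * Matrix.diagonal (fun m : Fin M => H ((l : ℕ) + (m : ℕ) * L)) * U := by
  ext r c
  rw [h𝓗, conjTranspose_mul_diagonal_dft_mul_apply l.pos.ne' h H hH U hU,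
    sum_range_mul_ite_dvd_sub r.pos, mul_sum]
  refine sum_congr rfl fun k _ => ?_
  rw [exp_neg_two_pi_I_mul_polyphase_shift r.isLt c.isLt]
  ring

theorem vofdm_blocked_channel_diagonalization (L M : ℕ) (hL : 0 < L) (hM : 0 < M)
    (h : ℕ → ℂ) (D : ℕ) (hD : D < L * M) (hsupp : ∀ d : ℕ, D < d → h d = 0)
    (l : Fin L)
    (H : ℕ → ℂ)
    (hH : ∀ nn : ℕ, H nn = ∑ d ∈ Finset.range (L * M),
        h d * Complex.exp (-2 * Real.pi * I * nn * d / (L * M)))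
    (𝓗 : Matrix (Fin M) (Fin M) ℂ)
    (h𝓗 : ∀ r c : Fin M,
      𝓗 r c = (if (r : ℕ) < (c : ℕ)
            then Complex.exp (-2 * Real.pi * I * (l : ℂ) / L) else 1) *
          ∑ k ∈ Finset.range L,
            h (k * M + (((r : ℤ) - (c : ℤ)) % (M : ℤ)).toNat) *
              Complex.exp (-2 * Real.pi * I * (l : ℂ) * k / L))
    (U : Matrix (Fin M) (Fin M) ℂ)
    (hU : ∀ r c : Fin M,
      U r c = (1 / (Real.sqrt M : ℂ)) *
        Complex.exp (-2 * Real.pi * I * ((l : ℂ) + (r : ℂ) * L) * (c : ℂ) / (L * M))) :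
    𝓗 = Uᴴ * Matrix.diagonal (fun m : Fin M => H ((l : ℕ) + (m : ℕ) * L)) * U :=
  vofdm_blocked_channel_diagonalization_general L M h l H hH 𝓗 h𝓗 U hU
end
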